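/- arXiv:2603.14962 — 2 statements merged into one kernel-verified Lean document; each statement's English description precedes it below -/
import Mathlib

section
/- Let H be a κ-regular graph on n vertices with adjacency eigenvalues κ = λ₁ ≥ λ₂ ≥ ... ≥ λₙ, and let G be a connected graph on m ≥ 2 vertices. Then for every j ∈ {2,...,n}, the number −2−λⱼ is an eigenvalue of the distance matrix D of the corona graph G⊙H. -/
open Matrix BigOperators

/-- The join `K₁ + H` of a single vertex (labelled `none`) with `H`. -/
def joinOne {V₂ : Type*} (H : SimpleGraph V₂) : SimpleGraph (Option V₂) where
  Adj i j := (∃ a b, i = some a ∧ j = some b ∧ H.Adj a b) ∨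
    (i = none ∧ j ≠ none) ∨ (i ≠ none ∧ j = none)
  symm := by
    constructor
    rintro i j (⟨a, b, ha, hb, hab⟩ | ⟨h1, h2⟩ | ⟨h1, h2⟩)
    · exact Or.inl ⟨b, a, hb, ha, hab.symm⟩
    · exact Or.inr (Or.inr ⟨h2, h1⟩)
    · exact Or.inr (Or.inl ⟨h2, h1⟩)
  loopless := by
    constructor
    rintro i (⟨a, b, ha, hb, hab⟩ | ⟨h1, h2⟩ | ⟨h1, h2⟩)
    · rw [ha] at hb; injection hb with h; subst h; exact H.irrefl hab
    · exact h2 h1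
    · exact h1 h2

/-- The corona graph `G ⊙ H`, on vertex set `V₁ × ({o} ∪ V₂)` with `o = none`. -/
def corona {V₁ V₂ : Type*} (G : SimpleGraph V₁) (H : SimpleGraph V₂) :
    SimpleGraph (V₁ × Option V₂) where
  Adj p q := (p.2 = none ∧ q.2 = none ∧ G.Adj p.1 q.1) ∨
    (p.1 = q.1 ∧ (joinOne H).Adj p.2 q.2)
  symm := by
    constructor
    rintro p q (⟨h1, h2, h3⟩ | ⟨h1, h2⟩)
    · exact Or.inl ⟨h2, h1, h3.symm⟩
    · exact Or.inr ⟨h1.symm, h2.symm⟩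
  loopless := by
    constructor
    rintro p (⟨_, _, h⟩ | ⟨_, h⟩)
    · exact G.irrefl h
    · exact (joinOne H).irrefl h

/-- The distance matrix of a graph, with real entries. -/
noncomputable def distMatrix {V : Type*} (G : SimpleGraph V) : Matrix V V ℝ :=
  fun x y => (G.dist x y : ℝ)

/-!
Since `H` is `κ`-regular and `θ ≠ κ`, an eigenvector `x` of `A_H` for `θ` is orthogonal to the
all-ones vector. Place `x` on every copy of `H` and `0` on the vertices of `G`. Seen from a vertex
`p`, the distance to the vertex `i` of the `z`-th copy of `H` depends on `i` only when `p` lies in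
that same copy, so all other contributions are killed by `∑ x = 0`. Within one copy the distance
matrix is `2J - 2I - A_H`, which sends `x` to `(-2 - θ) x`.
-/
namespace SimpleGraph

variable {V : Type*} {G : SimpleGraph V}

lemma Walk.le_add_length_of_adj_le {φ : V → ℕ} (hφ : ∀ ⦃a b⦄, G.Adj a b → φ a ≤ φ b + 1)
    {u v : V} (w : G.Walk u v) : φ u ≤ φ v + w.length := by
  induction w with
  | nil => simp
  | cons h _ ih => rw [Walk.length_cons]; linarith [hφ h]

lemma dist_eq_of_adj_le {φ : V → ℕ} (hφ : ∀ ⦃a b⦄, G.Adj a b → φ a ≤ φ b + 1)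
    {u v : V} (hv : φ v = 0) (w : G.Walk u v) (hw : w.length = φ u) : G.dist u v = φ u := by
  obtain ⟨w', hw'⟩ := w.reachable.exists_walk_length_eq_dist
  have := w'.le_add_length_of_adj_le hφ
  have := dist_le w
  omega

variable {R : Type*} [CommRing R] [NoZeroDivisors R] [Fintype V] [DecidableRel G.Adj]

lemma IsRegularOfDegree.sum_eq_zero_of_adjMatrix_mulVec_eq_smul {κ : ℕ}
    (hreg : G.IsRegularOfDegree κ) {θ : R} (hθ : θ ≠ κ) {x : V → R}
    (hx : G.adjMatrix R *ᵥ x = θ • x) : ∑ i, x i = 0 := by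
  have hcol : 1 ᵥ* G.adjMatrix R = (κ : R) • 1 := by
    ext v
    simp [adjMatrix_vecMul_apply, hreg v]
  have h : (θ - κ) * ∑ i, x i = 0 := by
    have := Matrix.dotProduct_mulVec 1 (G.adjMatrix R) x
    rw [hx, hcol] at this
    simp only [dotProduct_smul, smul_dotProduct, one_dotProduct, smul_eq_mul] at this
    rw [sub_mul, this, sub_self]
  exact (mul_eq_zero.mp h).resolve_left (sub_ne_zero.mpr hθ)

end SimpleGraph

section Corona

open SimpleGraph

variable {V₁ V₂ : Type*} (G : SimpleGraph V₁) (H : SimpleGraph V₂)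

/- `(y, none)` is the vertex `y` of `G`, the hub of the `y`-th copy of `H`, whose vertices
`(y, some i)` we call leaves. -/

lemma corona_adj_hub_leaf (y : V₁) (i : V₂) : (corona G H).Adj (y, none) (y, some i) :=
  Or.inr ⟨rfl, Or.inr (Or.inl ⟨rfl, Option.some_ne_none i⟩)⟩

lemma corona_adj_leaf_leaf_iff {y : V₁} {j i : V₂} :
    (corona G H).Adj (y, some j) (y, some i) ↔ H.Adj j i := by
  simp [corona, joinOne]

def coronaHubHom : G →g corona G H where
  toFun y := (y, none)
  map_rel' h := Or.inl ⟨rfl, rfl, h⟩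

lemma exists_corona_walk_hub_hub (hG : G.Connected) (y z : V₁) :
    ∃ w : (corona G H).Walk (y, none) (z, none), w.length = G.dist y z := by
  obtain ⟨w, hw⟩ := hG.exists_walk_length_eq_dist y z
  exact ⟨w.map (coronaHubHom G H), (w.length_map _).trans hw⟩

/- The distance to the leaf `(z, some i)`, except that the other leaves of the `z`-th copy all
get `1`. Being `1`-Lipschitz along edges, it bounds distances to `(z, some i)` from below. -/
open Classical in
noncomputable def leafPotential (z : V₁) (i : V₂) : V₁ × Option V₂ → ℕ
  | (y, none) => G.dist y z + 1
  | (y, some j) => if y = z then (if j = i then 0 else 1) else G.dist y z + 2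

lemma leafPotential_le_of_adj (hG : G.Connected) (z : V₁) (i : V₂) ⦃p q : V₁ × Option V₂⦄
    (h : (corona G H).Adj p q) : leafPotential G z i p ≤ leafPotential G z i q + 1 := by
  obtain ⟨y, a⟩ := p
  obtain ⟨w, b⟩ := q
  rcases h with ⟨rfl, rfl, hyw⟩ | ⟨rfl, ⟨j, k, rfl, rfl, -⟩ | ⟨rfl, hb⟩ | ⟨ha, rfl⟩⟩
  · have := hG.dist_triangle (u := y) (v := w) (w := z)
    have : G.dist y w = 1 := dist_eq_one_iff_adj.mpr hyw
    simp only [leafPotential]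
    omega
  · simp only [leafPotential]
    split_ifs <;> omega
  · obtain ⟨k, rfl⟩ := Option.ne_none_iff_exists'.mp hb
    simp only [leafPotential]
    split_ifs <;> simp_all
  · obtain ⟨j, rfl⟩ := Option.ne_none_iff_exists'.mp ha
    simp only [leafPotential]
    split_ifs <;> simp_all

lemma corona_dist_hub_leaf (hG : G.Connected) (y z : V₁) (i : V₂) :
    (corona G H).dist (y, none) (z, some i) = G.dist y z + 1 := by
  obtain ⟨w, hw⟩ := exists_corona_walk_hub_hub G H hG y z
  refine dist_eq_of_adj_le (leafPotential_le_of_adj G H hG z i) ?_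
    (w.concat (corona_adj_hub_leaf G H z i)) ?_
  · simp [leafPotential]
  · simp [leafPotential, hw]

lemma corona_dist_leaf_leaf_of_ne (hG : G.Connected) {y z : V₁} (hyz : y ≠ z) (j i : V₂) :
    (corona G H).dist (y, some j) (z, some i) = G.dist y z + 2 := by
  obtain ⟨w, hw⟩ := exists_corona_walk_hub_hub G H hG y z
  have hφ : leafPotential G z i (y, some j) = G.dist y z + 2 := by simp [leafPotential, hyz]
  rw [← hφ]
  refine dist_eq_of_adj_le (leafPotential_le_of_adj G H hG z i) ?_
    (.cons (corona_adj_hub_leaf G H y j).symm (w.concat (corona_adj_hub_leaf G H z i))) ?_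
  · simp [leafPotential]
  · simp [hw, hφ]

lemma corona_dist_leaf_leaf_same [DecidableEq V₂] [DecidableRel H.Adj] (y : V₁) (j i : V₂) :
    (corona G H).dist (y, some j) (y, some i) =
      if j = i then 0 else if H.Adj j i then 1 else 2 := by
  split_ifs with hji hadj
  · simp [hji]
  · exact dist_eq_one_iff_adj.mpr ((corona_adj_leaf_leaf_iff G H).mpr hadj)
  · let w : (corona G H).Walk (y, some j) (y, some i) :=
      .cons (corona_adj_hub_leaf G H y j).symm (corona_adj_hub_leaf G H y i).toWalk
    have := dist_le w
    have := w.reachable.one_lt_dist_of_ne_of_not_adj (by simpa using hji)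
      (mt (corona_adj_leaf_leaf_iff G H).mp hadj)
    simp only [w, Walk.length_cons, Adj.toWalk, Walk.length_nil] at *
    omega

end Corona

section CoronaLift

variable (V₁ : Type*) {V₂ R : Type*}

def coronaLift [Zero R] (x : V₂ → R) : V₁ × Option V₂ → R := fun p => p.2.elim 0 x

variable {V₁}

lemma coronaLift_smul [Zero R] [SMulZeroClass R R] (c : R) (x : V₂ → R) :
    coronaLift V₁ (c • x) = c • coronaLift V₁ x := by
  ext ⟨y, _ | i⟩ <;> simp [coronaLift]

lemma coronaLift_ne_zero [Zero R] [Nonempty V₁] {x : V₂ → R} (hx : x ≠ 0) :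
    coronaLift V₁ x ≠ 0 := by
  obtain ⟨i, hi⟩ := Function.ne_iff.mp hx
  exact Function.ne_iff.mpr ⟨(Classical.arbitrary V₁, some i), hi⟩

lemma mulVec_coronaLift_apply [Fintype V₁] [Fintype V₂] [NonUnitalNonAssocSemiring R]
    (M : Matrix (V₁ × Option V₂) (V₁ × Option V₂) R) (x : V₂ → R) (p : V₁ × Option V₂) :
    (M *ᵥ coronaLift V₁ x) p = ∑ z, ∑ i, M p (z, some i) * x i := by
  simp [Matrix.mulVec, dotProduct, Fintype.sum_prod_type, Fintype.sum_option, coronaLift]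

end CoronaLift

lemma distMatrix_corona_mulVec_coronaLift {V₁ V₂ : Type*} [Fintype V₁] [Fintype V₂]
    (G : SimpleGraph V₁) (hG : G.Connected) (H : SimpleGraph V₂) [DecidableRel H.Adj]
    {x : V₂ → ℝ} (hx : ∑ i, x i = 0) :
    distMatrix (corona G H) *ᵥ coronaLift V₁ x =
      coronaLift V₁ (-(2 • x + H.adjMatrix ℝ *ᵥ x)) := by
  classical
  ext ⟨y, _ | j⟩ <;> rw [mulVec_coronaLift_apply]
  · simp [distMatrix, corona_dist_hub_leaf G H hG, ← Finset.mul_sum, hx, coronaLift]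
  · rw [Fintype.sum_eq_single y fun z hz => by
      simp [distMatrix, corona_dist_leaf_leaf_of_ne G H hG (Ne.symm hz), ← Finset.mul_sum, hx]]
    have hd : ∀ i, distMatrix (corona G H) (y, some j) (y, some i) =
        2 - ((2 : ℝ) • (1 : Matrix V₂ V₂ ℝ) + H.adjMatrix ℝ) j i := by
      intro i
      rw [distMatrix, corona_dist_leaf_leaf_same]
      by_cases hji : j = i
      · simp [hji]
      · by_cases hadj : H.Adj j i <;> norm_num [hji, hadj, Matrix.one_apply_ne hji]
    have hrow : ∑ i, ((2 : ℝ) • (1 : Matrix V₂ V₂ ℝ) + H.adjMatrix ℝ) j i * x i =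
        (2 • x + H.adjMatrix ℝ *ᵥ x) j := by
      change (((2 : ℝ) • (1 : Matrix V₂ V₂ ℝ) + H.adjMatrix ℝ) *ᵥ x) j = _
      rw [Matrix.add_mulVec, Matrix.smul_mulVec, Matrix.one_mulVec, ofNat_smul_eq_nsmul]
    simp only [hd, sub_mul, Finset.sum_sub_distrib, ← Finset.mul_sum, hx, hrow]
    simp [coronaLift]

theorem corona_distMatrix_eigenvalue_from_H_general {V₁ V₂ : Type*} [Fintype V₁] [Fintype V₂]
    (G : SimpleGraph V₁) (hG : G.Connected)
    (H : SimpleGraph V₂) [DecidableRel H.Adj] (κ : ℕ) (hreg : H.IsRegularOfDegree κ)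
    (θ : ℝ) (hθ : θ ≠ (κ : ℝ))
    (hev : ∃ x : V₂ → ℝ, x ≠ 0 ∧ (H.adjMatrix ℝ).mulVec x = θ • x) :
    ∃ f : V₁ × Option V₂ → ℝ, f ≠ 0 ∧
      (distMatrix (corona G H)).mulVec f = (-2 - θ) • f := by
  obtain ⟨x, hx0, hx⟩ := hev
  have : Nonempty V₁ := hG.nonempty
  have hsum : ∑ i, x i = 0 := hreg.sum_eq_zero_of_adjMatrix_mulVec_eq_smul hθ hx
  refine ⟨coronaLift V₁ x, coronaLift_ne_zero hx0, ?_⟩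
  rw [distMatrix_corona_mulVec_coronaLift G hG H hsum, hx, ← coronaLift_smul]
  congr 1
  module

/-- For `H` a `κ`-regular graph and `G` connected on `m ≥ 2` vertices,
every adjacency eigenvalue `θ ≠ κ` of `H` (i.e. `θ = λⱼ` with `j ≥ 2`) yields an
eigenvalue `−2−θ` of the distance matrix of the corona graph `G ⊙ H`. -/
theorem corona_distMatrix_eigenvalue_from_H {V₁ V₂ : Type*} [Fintype V₁] [Fintype V₂]
    [DecidableEq V₂]
    (G : SimpleGraph V₁) (hG : G.Connected) (hm : 2 ≤ Fintype.card V₁)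
    (H : SimpleGraph V₂) [DecidableRel H.Adj] (κ : ℕ) (hreg : H.IsRegularOfDegree κ)
    (θ : ℝ) (hθ : θ ≠ (κ : ℝ))
    (hev : ∃ x : V₂ → ℝ, x ≠ 0 ∧ (H.adjMatrix ℝ).mulVec x = θ • x) :
    ∃ f : V₁ × Option V₂ → ℝ, f ≠ 0 ∧
      (distMatrix (corona G H)).mulVec f = (-2 - θ) • f :=
  corona_distMatrix_eigenvalue_from_H_general G hG H κ hreg θ hθ hev
end

section
/- Let G be a connected graph on m ≥ 2 vertices with QEC(G) = 0, or let H be a graph with −2 ∈ ev(A_H). Then λ = 0 belongs to λ(𝒮), i.e., there exist f with ⟨1,f⟩=0, ⟨f,f⟩=1, and μ ∈ ℝ such that D f = (μ/2)1, where D is the distance matrix of G⊙H. -/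
open Matrix BigOperators

/-- The quadratic embedding constant of a graph:
`QEC(G) = max {⟨f, D f⟩ : ⟨f,f⟩ = 1, ⟨1,f⟩ = 0}`. -/
noncomputable def QEC {V : Type*} [Fintype V] (G : SimpleGraph V) : ℝ :=
  sSup {r : ℝ | ∃ f : V → ℝ, (∑ x, f x * f x) = 1 ∧ (∑ x, f x) = 0 ∧
    r = f ⬝ᵥ (distMatrix G).mulVec f}

/-! If `QEC(G) = 0`, a maximiser `g` of `⟨f, D_G f⟩` on the unit vectors of `1ᗮ` maximises
the form on all of `1ᗮ` with value `0`, so it is a critical point there and `D_G g` is a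
multiple of `1`. Putting `g` on the roots and `0` on the copies of `H` keeps `D f` constant,
since `d((y, w), (z, o)) = d_G(y, z) + [w ≠ o]` and `∑ g = 0`.

If `A_H x = -2x`, put `x` on every copy of `H` and `-∑ x` on every root. Seen from any vertex,
a copy of `H` other than its own lies exactly one step further away than its root, while
inside its own copy the distances are `2 - 2δ - A_H`; either way each block contributes `∑ x`
to every entry of `D f`.

In both cases normalising `f` gives a solution with `λ = 0`. -/

open SimpleGraph

theorem SimpleGraph.Walk.le_add_length {V : Type*} {C : SimpleGraph V} {σ : V → ℕ}
    (hσ : ∀ p q, C.Adj p q → σ p ≤ σ q + 1) {p q : V} (W : C.Walk p q) :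
    σ p ≤ σ q + W.length := by
  induction W with
  | nil => simp
  | cons h _ ih => grind [Walk.length_cons, hσ _ _ h]

theorem SimpleGraph.Connected.le_add_dist {V : Type*} {C : SimpleGraph V} (hC : C.Connected)
    {σ : V → ℕ} (hσ : ∀ p q, C.Adj p q → σ p ≤ σ q + 1) (p q : V) :
    σ p ≤ σ q + C.dist p q := by
  obtain ⟨W, hW⟩ := hC.exists_walk_length_eq_dist p q
  exact hW ▸ W.le_add_length hσ

theorem SimpleGraph.Adj.dist_le_add_one {V : Type*} {G : SimpleGraph V} {a b : V}
    (h : G.Adj a b) (z : V) : G.dist a z ≤ G.dist b z + 1 := by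
  simpa [dist_eq_one_iff_adj.mpr h, add_comm] using h.reachable.dist_triangle_left z

theorem SimpleGraph.Hom.dist_le {V W : Type*} {G : SimpleGraph V} {G' : SimpleGraph W}
    (f : G →g G') (hG : G.Connected) (u v : V) : G'.dist (f u) (f v) ≤ G.dist u v := by
  obtain ⟨p, hp⟩ := hG.exists_walk_length_eq_dist u v
  simpa [hp] using SimpleGraph.dist_le (p.map f)

section Corona

variable {V₁ V₂ : Type*} {G : SimpleGraph V₁} {H : SimpleGraph V₂} {y z : V₁} {i j : V₂}

@[simp]
theorem corona_adj_none_none : (corona G H).Adj (y, none) (z, none) ↔ G.Adj y z := by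
  simp [corona, joinOne]

@[simp]
theorem corona_adj_some_none : (corona G H).Adj (y, some i) (z, none) ↔ y = z := by
  simp [corona, joinOne]

@[simp]
theorem corona_adj_none_some : (corona G H).Adj (y, none) (z, some j) ↔ y = z := by
  simp [corona, joinOne]

@[simp]
theorem corona_adj_some_some :
    (corona G H).Adj (y, some i) (z, some j) ↔ y = z ∧ H.Adj i j := by
  simp [corona, joinOne]

variable (H) in
@[simps]
def coronaRoot : G →g corona G H where
  toFun y := (y, none)
  map_rel' := corona_adj_none_none.mpr

variable (H) in
theorem corona_connected (hG : G.Connected) : (corona G H).Connected := by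
  have : Nonempty V₁ := hG.nonempty
  have to_root : ∀ p : V₁ × Option V₂, (corona G H).Reachable p (p.1, none) := by
    rintro ⟨y, _ | i⟩
    · rfl
    · exact (corona_adj_some_none.mpr rfl).reachable
  refine Connected.mk fun p q => ((to_root p).trans ?_).trans (to_root q).symm
  exact (hG.preconnected p.1 q.1).map (coronaRoot H)

theorem dist_corona_none_le (hG : G.Connected) (p : V₁ × Option V₂) (z : V₁) :
    (corona G H).dist p (z, none) ≤ G.dist p.1 z + p.2.elim 0 fun _ => 1 := by
  obtain ⟨y, _ | i⟩ := p
  · exact (coronaRoot H).dist_le hG y z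
  · calc (corona G H).dist (y, some i) (z, none)
        ≤ (corona G H).dist (y, some i) (y, none) + (corona G H).dist (y, none) (z, none) :=
          (corona_connected H hG).dist_triangle
      _ ≤ G.dist y z + 1 := by
          rw [dist_eq_one_iff_adj.mpr (corona_adj_some_none.mpr rfl), add_comm]
          gcongr
          exact (coronaRoot H).dist_le hG y z

theorem dist_corona_none (hG : G.Connected) (p : V₁ × Option V₂) (z : V₁) :
    (corona G H).dist p (z, none) = G.dist p.1 z + p.2.elim 0 fun _ => 1 := by
  let σ : V₁ × Option V₂ → ℕ := fun q => G.dist q.1 z + q.2.elim 0 fun _ => 1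
  have hσ : ∀ q q', (corona G H).Adj q q' → σ q ≤ σ q' + 1 := by
    rintro ⟨a, w⟩ ⟨b, u⟩ (⟨rfl, rfl, hab⟩ | ⟨rfl : a = b, -⟩)
    · simpa [σ] using hab.dist_le_add_one z
    · cases w <;> cases u <;> simp [σ]
      omega
  refine (dist_corona_none_le hG p z).antisymm ?_
  simpa [σ] using (corona_connected H hG).le_add_dist hσ p (z, none)

theorem dist_corona_some_some_of_ne (hG : G.Connected) (hyz : y ≠ z) (i j : V₂) :
    (corona G H).dist (y, some i) (z, some j) = G.dist y z + 2 := by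
  classical
  have hC := corona_connected H hG
  refine le_antisymm ?_ ?_
  · calc (corona G H).dist (y, some i) (z, some j)
        ≤ (corona G H).dist (y, some i) (z, none) + (corona G H).dist (z, none) (z, some j) :=
          hC.dist_triangle
      _ = G.dist y z + 2 := by
          rw [dist_corona_none hG, dist_eq_one_iff_adj.mpr (corona_adj_none_some.mpr rfl)]
          rfl
  · let σ : V₁ × Option V₂ → ℕ := fun q =>
      if q.1 = z then (if q.2 = some j then 0 else 1) else G.dist q.1 z + q.2.elim 1 fun _ => 2
    have hσ : ∀ q q', (corona G H).Adj q q' → σ q ≤ σ q' + 1 := by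
      rintro ⟨a, w⟩ ⟨b, u⟩ (⟨rfl, rfl, hab⟩ | ⟨rfl : a = b, -⟩)
      · have := hab.dist_le_add_one z
        have := hab.symm.dist_le_add_one z
        by_cases ha : a = z <;> by_cases hb : b = z <;> simp_all [σ]
      · cases w <;> cases u <;> simp only [σ, Option.elim_none, Option.elim_some] <;>
          split_ifs <;> omega
    simpa [σ, hyz] using hC.le_add_dist hσ (y, some i) (z, some j)

theorem dist_corona_some_some_self (hG : G.Connected) [DecidableEq V₂] [DecidableRel H.Adj]
    (y : V₁) (i j : V₂) :
    (corona G H).dist (y, some i) (y, some j) =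
      if i = j then 0 else if H.Adj i j then 1 else 2 := by
  split_ifs with hij hadj
  · rw [hij, dist_self]
  · exact dist_eq_one_iff_adj.mpr (corona_adj_some_some.mpr ⟨rfl, hadj⟩)
  · refine le_antisymm ?_ ?_
    · calc (corona G H).dist (y, some i) (y, some j)
          ≤ (corona G H).dist (y, some i) (y, none) + (corona G H).dist (y, none) (y, some j) :=
            (corona_connected H hG).dist_triangle
        _ = 2 := by
          rw [dist_eq_one_iff_adj.mpr (corona_adj_some_none.mpr rfl),
            dist_eq_one_iff_adj.mpr (corona_adj_none_some.mpr rfl)]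
    · exact ((corona_connected H hG).preconnected _ _).one_lt_dist_of_ne_of_not_adj
        (by simpa using hij) (by simpa using hadj)

theorem dist_corona_some_of_ne (hG : G.Connected) (hyz : y ≠ z) (w : Option V₂) (j : V₂) :
    (corona G H).dist (y, w) (z, some j) = (corona G H).dist (y, w) (z, none) + 1 := by
  cases w with
  | none => rw [dist_comm, dist_corona_none hG, dist_corona_none hG, dist_comm]; rfl
  | some i => rw [dist_corona_some_some_of_ne hG hyz, dist_corona_none hG]; rfl

end Corona

section QuadraticForm

variable {V : Type*} [Fintype V]

theorem exists_pos_smul_dotProduct_self_eq_one {f : V → ℝ} (hf : f ≠ 0) :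
    ∃ t : ℝ, 0 < t ∧ (t • f) ⬝ᵥ (t • f) = 1 := by
  have hpos : 0 < f ⬝ᵥ f := by simpa using dotProduct_star_self_pos_iff.mpr hf
  refine ⟨(√(f ⬝ᵥ f))⁻¹, by positivity, ?_⟩
  rw [smul_dotProduct, dotProduct_smul, smul_eq_mul, smul_eq_mul, ← mul_assoc, ← mul_inv,
    Real.mul_self_sqrt hpos.le, inv_mul_cancel₀ hpos.ne']

theorem isCompact_unit_sum_eq_zero :
    IsCompact {f : V → ℝ | (∑ x, f x * f x) = 1 ∧ (∑ x, f x) = 0} := by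
  refine (isCompact_closedBall (0 : V → ℝ) 1).of_isClosed_subset ?_ ?_
  · exact (isClosed_eq (by fun_prop) continuous_const).inter
      (isClosed_eq (by fun_prop) continuous_const)
  · rintro f ⟨hf, -⟩
    rw [mem_closedBall_zero_iff, pi_norm_le_iff_of_nonneg zero_le_one]
    intro x
    rw [Real.norm_eq_abs, abs_le_one_iff_mul_self_le_one, ← hf]
    exact Finset.single_le_sum (f := fun x => f x * f x) (fun i _ => mul_self_nonneg (f i))
      (Finset.mem_univ x)

theorem exists_isGreatest_dotProduct_mulVec (D : Matrix V V ℝ) (hV : 1 < Fintype.card V) :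
    ∃ g : V → ℝ, ((∑ x, g x * g x) = 1 ∧ (∑ x, g x) = 0) ∧
      IsGreatest {r : ℝ | ∃ f : V → ℝ, (∑ x, f x * f x) = 1 ∧ (∑ x, f x) = 0 ∧
        r = f ⬝ᵥ D.mulVec f} (g ⬝ᵥ D *ᵥ g) := by
  classical
  obtain ⟨a, b, hab⟩ := Fintype.exists_pair_of_one_lt_card hV
  have hne : Pi.single a 1 - Pi.single b 1 ≠ (0 : V → ℝ) := fun h => by
    simpa [hab] using congrFun h a
  obtain ⟨t, -, ht⟩ := exists_pos_smul_dotProduct_self_eq_one hne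
  have hK : {f : V → ℝ | (∑ x, f x * f x) = 1 ∧ (∑ x, f x) = 0}.Nonempty :=
    ⟨t • (Pi.single a 1 - Pi.single b 1), ht, by simp [← Finset.mul_sum]⟩
  obtain ⟨g, hg, hmax⟩ := isCompact_unit_sum_eq_zero.exists_isMaxOn hK
    (f := fun f => f ⬝ᵥ D *ᵥ f) (by fun_prop)
  exact ⟨g, hg, ⟨g, hg.1, hg.2, rfl⟩, by rintro r ⟨f, hf1, hf0, rfl⟩; exact hmax ⟨hf1, hf0⟩⟩

theorem dotProduct_mulVec_nonpos_of_unit (D : Matrix V V ℝ)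
    (h : ∀ f : V → ℝ, (∑ x, f x * f x) = 1 → (∑ x, f x) = 0 → f ⬝ᵥ D *ᵥ f ≤ 0)
    (f : V → ℝ) (hf : ∑ x, f x = 0) : f ⬝ᵥ D *ᵥ f ≤ 0 := by
  rcases eq_or_ne f 0 with rfl | hf0
  · simp
  obtain ⟨t, ht, htf⟩ := exists_pos_smul_dotProduct_self_eq_one hf0
  have := h (t • f) htf (by simp [← Finset.mul_sum, hf])
  rw [mulVec_smul, dotProduct_smul, smul_dotProduct, smul_eq_mul, smul_eq_mul, ← mul_assoc] at this
  exact nonpos_of_mul_nonpos_right this (by positivity)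

theorem dotProduct_mulVec_eq_zero_of_nonpos {D : Matrix V V ℝ} (hD : D.IsSymm)
    (hle : ∀ f : V → ℝ, (∑ x, f x) = 0 → f ⬝ᵥ D *ᵥ f ≤ 0) {g : V → ℝ} (hg : ∑ x, g x = 0)
    (hgg : g ⬝ᵥ D *ᵥ g = 0) {v : V → ℝ} (hv : ∑ x, v x = 0) : v ⬝ᵥ D *ᵥ g = 0 := by
  have hsymm : g ⬝ᵥ D *ᵥ v = v ⬝ᵥ D *ᵥ g := by
    rw [dotProduct_mulVec, ← mulVec_transpose, hD.eq, dotProduct_comm]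
  -- `t ↦ Q (g + t • v)` is a nonpositive quadratic with no constant term
  have hquad : ∀ t : ℝ, 0 ≤ -(v ⬝ᵥ D *ᵥ v) * (t * t) + -(2 * (v ⬝ᵥ D *ᵥ g)) * t + 0 := by
    intro t
    have := hle (g + t • v) (by simp [Finset.sum_add_distrib, ← Finset.mul_sum, hg, hv])
    simp only [mulVec_add, mulVec_smul, dotProduct_add, add_dotProduct, dotProduct_smul,
      smul_dotProduct, smul_eq_mul, hgg, hsymm] at this
    linarith
  have := discrim_le_zero hquad
  rw [discrim] at this
  nlinarith [sq_nonneg (v ⬝ᵥ D *ᵥ g)]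

theorem eq_of_forall_sum_eq_zero_dotProduct_eq_zero {w : V → ℝ}
    (h : ∀ v : V → ℝ, (∑ x, v x) = 0 → v ⬝ᵥ w = 0) (a b : V) : w a = w b := by
  classical
  have := h (Pi.single a 1 - Pi.single b 1) (by simp [Finset.sum_sub_distrib])
  rwa [sub_dotProduct, single_dotProduct, single_dotProduct, one_mul, one_mul, sub_eq_zero] at this

theorem exists_unit_mulVec_eq_const {ι : Type*} [Fintype ι] (M : Matrix ι ι ℝ) {f : ι → ℝ}
    (hf : f ≠ 0) (hsum : ∑ p, f p = 0) (hconst : ∀ p q, (M *ᵥ f) p = (M *ᵥ f) q) :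
    ∃ (f : ι → ℝ) (μ : ℝ), M *ᵥ f = (μ / 2) • (fun _ => (1 : ℝ)) ∧
      (∑ p, f p) = 0 ∧ (∑ p, f p * f p) = 1 := by
  obtain ⟨p₀, -⟩ := Function.ne_iff.mp hf
  obtain ⟨t, -, ht⟩ := exists_pos_smul_dotProduct_self_eq_one hf
  refine ⟨t • f, 2 * (t * (M *ᵥ f) p₀), ?_, by simp [← Finset.mul_sum, hsum], ht⟩
  ext p
  simp [mulVec_smul, hconst p p₀]

end QuadraticForm

theorem distMatrix_isSymm {V : Type*} (G : SimpleGraph V) : (distMatrix G).IsSymm :=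
  Matrix.IsSymm.ext fun x y => by simp [distMatrix, SimpleGraph.dist_comm]

theorem exists_mulVec_distMatrix_const_of_QEC_eq_zero {V : Type*} [Fintype V]
    {G : SimpleGraph V} (hV : 1 < Fintype.card V) (hQ : QEC G = 0) :
    ∃ g : V → ℝ, g ≠ 0 ∧ (∑ x, g x) = 0 ∧
      ∀ a b, (distMatrix G *ᵥ g) a = (distMatrix G *ᵥ g) b := by
  obtain ⟨g, ⟨hg1, hg0⟩, hgreat⟩ := exists_isGreatest_dotProduct_mulVec (distMatrix G) hV
  have hgg : g ⬝ᵥ distMatrix G *ᵥ g = 0 := hgreat.csSup_eq.symm.trans hQ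
  have hle := dotProduct_mulVec_nonpos_of_unit (distMatrix G) fun f hf1 hf0 =>
    hgg ▸ hgreat.2 ⟨f, hf1, hf0, rfl⟩
  refine ⟨g, fun h => by simp [h] at hg1, hg0, ?_⟩
  exact eq_of_forall_sum_eq_zero_dotProduct_eq_zero fun v hv =>
    dotProduct_mulVec_eq_zero_of_nonpos (distMatrix_isSymm G) hle hg0 hgg hv

section CoronaVectors

variable {V₁ V₂ : Type*} {G : SimpleGraph V₁} {H : SimpleGraph V₂}

def coronaRootVec (g : V₁ → ℝ) : V₁ × Option V₂ → ℝ := fun p => p.2.elim (g p.1) 0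

theorem coronaRootVec_ne_zero {g : V₁ → ℝ} (hg : g ≠ 0) :
    (coronaRootVec g : V₁ × Option V₂ → ℝ) ≠ 0 := by
  obtain ⟨y, hy⟩ := Function.ne_iff.mp hg
  exact Function.ne_iff.mpr ⟨(y, none), hy⟩

variable [Fintype V₂]

def coronaFiberVec (x : V₂ → ℝ) : V₁ × Option V₂ → ℝ :=
  fun p => p.2.elim (-∑ i, x i) x

theorem coronaFiberVec_ne_zero [Nonempty V₁] {x : V₂ → ℝ} (hx : x ≠ 0) :
    (coronaFiberVec x : V₁ × Option V₂ → ℝ) ≠ 0 := by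
  obtain ⟨i, hi⟩ := Function.ne_iff.mp hx
  exact Function.ne_iff.mpr ⟨(Classical.arbitrary V₁, some i), hi⟩

theorem sum_distMatrix_corona_mul_coronaFiberVec (hG : G.Connected) [DecidableRel H.Adj]
    {x : V₂ → ℝ} (hx : H.adjMatrix ℝ *ᵥ x = (-2 : ℝ) • x) (y z : V₁) (w : Option V₂) :
    ∑ u, distMatrix (corona G H) (y, w) (z, u) * coronaFiberVec x (z, u) = ∑ i, x i := by
  classical
  rw [Fintype.sum_option]
  simp only [coronaFiberVec, Option.elim_none, Option.elim_some, distMatrix]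
  rcases eq_or_ne y z with rfl | hyz
  · cases w with
    | none =>
      have hroot (j : V₂) : (corona G H).dist (y, none) (y, some j) = 1 :=
        dist_eq_one_iff_adj.mpr (corona_adj_none_some.mpr rfl)
      simp [hroot]
    | some i =>
      have hAx : ∑ j, (if H.Adj i j then 1 else 0) * x j = -2 * x i := by
        simpa [mulVec, dotProduct, adjMatrix_apply] using congrFun hx i
      have hdist (j : V₂) : ((corona G H).dist (y, some i) (y, some j) : ℝ) * x j =
          2 * x j - 2 * (if i = j then x j else 0) - (if H.Adj i j then 1 else 0) * x j := by
        rw [dist_corona_some_some_self hG]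
        by_cases hij : i = j
        · subst hij; simp
        · by_cases hadj : H.Adj i j
          · simp [hij, hadj]
            ring
          · simp [hij, hadj]
      rw [dist_eq_one_iff_adj.mpr (corona_adj_some_none.mpr rfl),
        Finset.sum_congr rfl fun j _ => hdist j,
        Finset.sum_sub_distrib, Finset.sum_sub_distrib, hAx, ← Finset.mul_sum, ← Finset.mul_sum,
        Finset.sum_ite_eq Finset.univ i]
      simp only [Finset.mem_univ, if_true]
      push_cast
      ring
  · simp_rw [dist_corona_some_of_ne hG hyz]
    push_cast
    simp only [add_mul, one_mul, Finset.sum_add_distrib, ← Finset.mul_sum]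
    ring

variable [Fintype V₁]

theorem sum_coronaRootVec (g : V₁ → ℝ) :
    ∑ p, (coronaRootVec g : V₁ × Option V₂ → ℝ) p = ∑ y, g y := by
  simp [coronaRootVec, Fintype.sum_prod_type]

theorem sum_coronaFiberVec (x : V₂ → ℝ) :
    ∑ p, (coronaFiberVec x : V₁ × Option V₂ → ℝ) p = 0 := by
  simp [coronaFiberVec, Fintype.sum_prod_type]

theorem mulVec_distMatrix_corona_coronaRootVec (hG : G.Connected) {g : V₁ → ℝ}
    (hg : ∑ y, g y = 0) (p : V₁ × Option V₂) :
    (distMatrix (corona G H) *ᵥ coronaRootVec g) p = (distMatrix G *ᵥ g) p.1 := by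
  simp only [mulVec, dotProduct, Fintype.sum_prod_type, Fintype.sum_option, coronaRootVec,
    Option.elim_none, Option.elim_some, Pi.zero_apply, mul_zero, Finset.sum_const_zero, add_zero,
    distMatrix, dist_corona_none hG]
  obtain ⟨y, _ | i⟩ := p
  · simp
  · simp [add_mul, Finset.sum_add_distrib, hg]

theorem mulVec_distMatrix_corona_coronaFiberVec (hG : G.Connected) [DecidableRel H.Adj]
    {x : V₂ → ℝ} (hx : H.adjMatrix ℝ *ᵥ x = (-2 : ℝ) • x) (p : V₁ × Option V₂) :
    (distMatrix (corona G H) *ᵥ coronaFiberVec x) p = Fintype.card V₁ * ∑ i, x i := by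
  rw [mulVec, dotProduct, Fintype.sum_prod_type]
  simp [sum_distMatrix_corona_mul_coronaFiberVec hG hx]

end CoronaVectors

theorem zero_mem_lambdaS_general {V₁ V₂ : Type*} [Fintype V₁] [Fintype V₂]
    (G : SimpleGraph V₁) (hG : G.Connected) (hm : 2 ≤ Fintype.card V₁)
    (H : SimpleGraph V₂) [DecidableRel H.Adj]
    (h : QEC G = 0 ∨
      ∃ x : V₂ → ℝ, x ≠ 0 ∧ (H.adjMatrix ℝ).mulVec x = (-2 : ℝ) • x) :
    ∃ (f : V₁ × Option V₂ → ℝ) (μ : ℝ),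
      (distMatrix (corona G H)).mulVec f = (μ / 2) • (fun _ => (1 : ℝ)) ∧
      (∑ p, f p) = 0 ∧ (∑ p, f p * f p) = 1 := by
  rcases h with hQ | ⟨x, hx0, hx⟩
  · obtain ⟨g, hg0, hgsum, hgconst⟩ := exists_mulVec_distMatrix_const_of_QEC_eq_zero hm hQ
    refine exists_unit_mulVec_eq_const _ (coronaRootVec_ne_zero hg0)
      ((sum_coronaRootVec g).trans hgsum) fun p q => ?_
    rw [mulVec_distMatrix_corona_coronaRootVec hG hgsum,
      mulVec_distMatrix_corona_coronaRootVec hG hgsum, hgconst]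
  · have : Nonempty V₁ := hG.nonempty
    refine exists_unit_mulVec_eq_const _ (coronaFiberVec_ne_zero hx0) (sum_coronaFiberVec x)
      fun p q => ?_
    rw [mulVec_distMatrix_corona_coronaFiberVec hG hx,
      mulVec_distMatrix_corona_coronaFiberVec hG hx]

/-- If `QEC(G) = 0` or `−2 ∈ ev(A_H)`, then `λ = 0 ∈ λ(𝒮)`: there exist
`f` with `⟨1,f⟩ = 0`, `⟨f,f⟩ = 1` and `μ ∈ ℝ` with `D f = (μ/2)1`, where `D` is the
distance matrix of `G ⊙ H`. -/
theorem zero_mem_lambdaS {V₁ V₂ : Type*} [Fintype V₁] [Fintype V₂] [DecidableEq V₂]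
    (G : SimpleGraph V₁) (hG : G.Connected) (hm : 2 ≤ Fintype.card V₁)
    (H : SimpleGraph V₂) [DecidableRel H.Adj]
    (h : QEC G = 0 ∨
      ∃ x : V₂ → ℝ, x ≠ 0 ∧ (H.adjMatrix ℝ).mulVec x = (-2 : ℝ) • x) :
    ∃ (f : V₁ × Option V₂ → ℝ) (μ : ℝ),
      (distMatrix (corona G H)).mulVec f = (μ / 2) • (fun _ => (1 : ℝ)) ∧
      (∑ p, f p) = 0 ∧ (∑ p, f p * f p) = 1 :=
  zero_mem_lambdaS_general G hG hm H h
end
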